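/- arXiv:2412.01613 — 2 statements merged into one kernel-verified Lean document; each statement's English description precedes it below -/
import Mathlib

section
/- Let S = ⟨a_0,…,a_g⟩ be a numerical semigroup that is free for the arrangement (a_0,…,a_g), and let P_S(t) = Σ_{s∈S} t^s be its Poincaré series, a formal power series in ℤ⟦t⟧. Then P_S(t)·∏_{i=0}^{g} (1 − t^{a_i}) = ∏_{i=1}^{g} (1 − t^{n_i·a_i}) as formal power series; equivalently P_S(t) = ∏_{i=1}^{g} (1 − t^{n_i·a_i}) / ∏_{i=0}^{g} (1 − t^{a_i}). -/
/-- `eSeq a i = gcd(a 0, …, a i)`. -/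
def eSeq (a : ℕ → ℕ) : ℕ → ℕ
  | 0 => a 0
  | i + 1 => Nat.gcd (eSeq a i) (a (i + 1))

/-- `nSeq a i = e_{i-1} / e_i` (intended for `1 ≤ i`). -/
def nSeq (a : ℕ → ℕ) (i : ℕ) : ℕ := eSeq a (i - 1) / eSeq a i

/-- `gen a i = ⟨a 0, …, a i⟩`, the set of all ℕ-linear combinations. -/
def gen (a : ℕ → ℕ) (i : ℕ) : Set ℕ :=
  {s | ∃ c : ℕ → ℕ, s = ∑ j ∈ Finset.range (i + 1), c j * a j}

/-- The semigroup `S = ⟨a 0, …, a g⟩` is free for the arrangement `(a 0, …, a g)`. -/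
def IsFreeArr (a : ℕ → ℕ) (g : ℕ) : Prop :=
  eSeq a g = 1 ∧ ∀ i, 1 ≤ i → i ≤ g → nSeq a i * a i ∈ gen a (i - 1)

/-- The Poincaré series `P_S(t) = ∑_{s ∈ S} t^s` of a set `S ⊆ ℕ`,
as a formal power series over ℤ. -/
noncomputable def poincareSeries (S : Set ℕ) : PowerSeries ℤ :=
  PowerSeries.mk fun s => by classical exact if s ∈ S then 1 else 0

/-!
Write `A_i = {c a_i | c < n_i}` (`genStep a i`). Since `n_i a_i ∈ ⟨a_0, …, a_{i-1}⟩`, reducing the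
coefficient of `a_i` modulo `n_i` gives `⟨a_0, …, a_i⟩ = ⟨a_0, …, a_{i-1}⟩ + A_i`, and this sum is
direct: `⟨a_0, …, a_{i-1}⟩ ⊆ e_{i-1} ℕ`, and `c a_i ≡ c' a_i (mod e_{i-1})` forces
`c ≡ c' (mod e_{i-1} / gcd(e_{i-1}, a_i) = n_i)`. A direct sum of sets has the product of the
Poincaré series, the series of `A_i` is the geometric sum `∑_{c < n_i} t^{c a_i}`, and multiplying
it by `1 - t^{a_i}` gives `1 - t^{n_i a_i}`. Induction on `g` starts from
`P_{a_0 ℕ}(t) (1 - t^{a_0}) = 1`.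
-/

open PowerSeries Finset
open scoped Pointwise

open scoped Classical in
lemma coeff_poincareSeries (S : Set ℕ) (m : ℕ) :
    coeff m (poincareSeries S) = if m ∈ S then 1 else 0 := by
  rw [poincareSeries, coeff_mk]

lemma poincareSeries_coe_finset (s : Finset ℕ) :
    poincareSeries s = ∑ x ∈ s, (X : PowerSeries ℤ) ^ x := by
  classical
  ext m
  simp only [coeff_poincareSeries, map_sum, coeff_X_pow, Finset.sum_ite_eq, Finset.mem_coe]

lemma poincareSeries_add {A B : Set ℕ} (hinj : Set.InjOn (fun x : ℕ × ℕ => x.1 + x.2) (A ×ˢ B)) :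
    poincareSeries (A + B) = poincareSeries A * poincareSeries B := by
  classical
  ext m
  simp only [coeff_mul, coeff_poincareSeries, boole_mul, ← ite_and, Finset.sum_boole]
  have hcard_le_one : ({x ∈ antidiagonal m | x.1 ∈ A ∧ x.2 ∈ B} : Finset (ℕ × ℕ)).card ≤ 1 := by
    refine Finset.card_le_one.mpr fun x hx y hy => ?_
    simp only [Finset.mem_filter, Finset.HasAntidiagonal.mem_antidiagonal] at hx hy
    exact hinj hx.2 hy.2 (hx.1.trans hy.1.symm)
  split_ifs with hm
  · obtain ⟨p, hp, q, hq, rfl⟩ := Set.mem_add.mp hm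
    have hcard_pos : 0 < ({x ∈ antidiagonal (p + q) | x.1 ∈ A ∧ x.2 ∈ B} : Finset (ℕ × ℕ)).card :=
      Finset.card_pos.mpr ⟨(p, q), by simp [hp, hq]⟩
    norm_cast
    omega
  · norm_cast
    rw [eq_comm, Finset.card_eq_zero, Finset.filter_eq_empty_iff]
    rintro ⟨p, q⟩ hpq ⟨hp, hq⟩
    exact hm (Set.mem_add.mpr ⟨p, hp, q, hq, Finset.HasAntidiagonal.mem_antidiagonal.mp hpq⟩)

lemma poincareSeries_dvd_mul_one_sub_X_pow {d : ℕ} (hd : 0 < d) :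
    poincareSeries {s | d ∣ s} * (1 - X ^ d) = 1 := by
  classical
  ext m
  rw [mul_sub, mul_one, map_sub, coeff_mul_X_pow', coeff_poincareSeries, coeff_one]
  rcases Nat.eq_zero_or_pos m with rfl | hm
  · simp [hd.ne']
  by_cases hdm : d ≤ m
  · by_cases hdvd : d ∣ m <;>
      simp [hdm, hdvd, hm.ne', coeff_poincareSeries, Nat.dvd_sub_iff_left hdm (dvd_refl d)]
  · have : ¬ d ∣ m := fun h => hdm (Nat.le_of_dvd hm h)
    simp [hdm, this, hm.ne']

section Generators

variable {a : ℕ → ℕ}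

lemma gen_zero : gen a 0 = {s | a 0 ∣ s} := by
  ext s
  simp only [gen, zero_add, Finset.sum_range_one]
  constructor
  · rintro ⟨c, rfl⟩
    exact dvd_mul_left _ _
  · rintro ⟨k, rfl⟩
    exact ⟨fun _ => k, mul_comm _ _⟩

lemma add_mem_gen {i s t : ℕ} (hs : s ∈ gen a i) (ht : t ∈ gen a i) : s + t ∈ gen a i := by
  obtain ⟨c, rfl⟩ := hs
  obtain ⟨d, rfl⟩ := ht
  exact ⟨c + d, by simp only [Pi.add_apply, add_mul, Finset.sum_add_distrib]⟩

lemma mul_mem_gen {i s : ℕ} (k : ℕ) (hs : s ∈ gen a i) : k * s ∈ gen a i := by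
  obtain ⟨c, rfl⟩ := hs
  exact ⟨k • c, by simp only [Finset.mul_sum, Pi.smul_apply, smul_eq_mul, mul_assoc]⟩

lemma mem_gen_succ_iff {i s : ℕ} :
    s ∈ gen a (i + 1) ↔ ∃ p ∈ gen a i, ∃ c, s = p + c * a (i + 1) := by
  constructor
  · rintro ⟨c, rfl⟩
    exact ⟨_, ⟨c, rfl⟩, c (i + 1), Finset.sum_range_succ _ _⟩
  · rintro ⟨p, ⟨c, rfl⟩, k, rfl⟩
    refine ⟨Function.update c (i + 1) k, Eq.symm ?_⟩
    rw [Finset.sum_range_succ, Function.update_self]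
    congr 1
    refine Finset.sum_congr rfl fun j hj => ?_
    rw [Function.update_of_ne (Finset.mem_range.mp hj).ne]

lemma eSeq_dvd {i j : ℕ} (hji : j ≤ i) : eSeq a i ∣ a j := by
  induction i with
  | zero => rw [Nat.le_zero.mp hji]; rfl
  | succ i ih =>
    rcases hji.lt_or_eq with hji | rfl
    · exact (Nat.gcd_dvd_left _ _).trans (ih (Nat.lt_succ_iff.mp hji))
    · exact Nat.gcd_dvd_right _ _

lemma eSeq_dvd_of_mem_gen {i s : ℕ} (hs : s ∈ gen a i) : eSeq a i ∣ s := by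
  obtain ⟨c, rfl⟩ := hs
  exact Finset.dvd_sum fun j hj =>
    (eSeq_dvd (Nat.lt_succ_iff.mp (Finset.mem_range.mp hj))).mul_left _

lemma eSeq_pos (h0 : 0 < a 0) (i : ℕ) : 0 < eSeq a i := by
  induction i with
  | zero => exact h0
  | succ i ih => exact Nat.gcd_pos_of_pos_left _ ih

lemma nSeq_succ (i : ℕ) : nSeq a (i + 1) = eSeq a i / Nat.gcd (eSeq a i) (a (i + 1)) := rfl

lemma nSeq_pos (h0 : 0 < a 0) (i : ℕ) : 0 < nSeq a (i + 1) :=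
  Nat.div_pos (Nat.le_of_dvd (eSeq_pos h0 i) (Nat.gcd_dvd_left _ _))
    (Nat.gcd_pos_of_pos_left _ (eSeq_pos h0 i))

def genStep (a : ℕ → ℕ) (i : ℕ) : Finset ℕ := (range (nSeq a i)).image (· * a i)

lemma poincareSeries_genStep {i : ℕ} (hi : 0 < a i) :
    poincareSeries (genStep a i) = ∑ c ∈ range (nSeq a i), ((X : PowerSeries ℤ) ^ a i) ^ c := by
  rw [poincareSeries_coe_finset, genStep,
    Finset.sum_image fun _ _ _ _ h => Nat.eq_of_mul_eq_mul_right hi h]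
  simp only [pow_mul']

lemma gen_succ_eq_add {i : ℕ} (h0 : 0 < a 0) (hmem : nSeq a (i + 1) * a (i + 1) ∈ gen a i) :
    gen a (i + 1) = gen a i + genStep a (i + 1) := by
  set n := nSeq a (i + 1)
  ext s
  rw [mem_gen_succ_iff, Set.mem_add]
  constructor
  · rintro ⟨p, hp, c, rfl⟩
    refine ⟨p + c / n * (n * a (i + 1)), add_mem_gen hp (mul_mem_gen _ hmem), c % n * a (i + 1),
      Finset.mem_image_of_mem _ (Finset.mem_range.mpr (Nat.mod_lt _ (nSeq_pos h0 i))), ?_⟩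
    conv_rhs => rw [← Nat.div_add_mod c n]
    ring
  · rintro ⟨p, hp, _, hq, rfl⟩
    obtain ⟨c, -, rfl⟩ := Finset.mem_image.mp hq
    exact ⟨p, hp, c, rfl⟩

lemma injOn_add_gen_genStep {i : ℕ} (h0 : 0 < a 0) :
    Set.InjOn (fun x : ℕ × ℕ => x.1 + x.2) (gen a i ×ˢ genStep a (i + 1)) := by
  rintro ⟨p, _⟩ ⟨hp, hq⟩ ⟨p', _⟩ ⟨hp', hq'⟩ heq
  obtain ⟨c, hc, rfl⟩ := Finset.mem_image.mp hq
  obtain ⟨c', hc', rfl⟩ := Finset.mem_image.mp hq'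
  dsimp only at heq
  have hpp' : p ≡ p' [MOD eSeq a i] :=
    (Nat.modEq_zero_iff_dvd.mpr (eSeq_dvd_of_mem_gen hp)).trans
      (Nat.modEq_zero_iff_dvd.mpr (eSeq_dvd_of_mem_gen hp')).symm
  have hmod : c * a (i + 1) ≡ c' * a (i + 1) [MOD eSeq a i] := by
    refine Nat.ModEq.add_left_cancel' p ?_
    rw [heq]
    exact (hpp'.add_right _).symm
  have hcc' : c ≡ c' [MOD nSeq a (i + 1)] := by
    rw [nSeq_succ]
    exact hmod.cancel_right_div_gcd (eSeq_pos h0 i)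
  obtain rfl := hcc'.eq_of_lt_of_lt (Finset.mem_range.mp hc) (Finset.mem_range.mp hc')
  rw [Nat.add_right_cancel heq]

lemma poincareSeries_gen_succ {i : ℕ} (h0 : 0 < a 0) (hi : 0 < a (i + 1))
    (hmem : nSeq a (i + 1) * a (i + 1) ∈ gen a i) :
    poincareSeries (gen a (i + 1)) =
      poincareSeries (gen a i) *
        ∑ c ∈ range (nSeq a (i + 1)), ((X : PowerSeries ℤ) ^ a (i + 1)) ^ c := by
  rw [gen_succ_eq_add h0 hmem, poincareSeries_add (injOn_add_gen_genStep h0),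
    poincareSeries_genStep hi]

lemma poincareSeries_gen_mul_prod {g : ℕ} (hpos : ∀ i, i ≤ g → 0 < a i)
    (hmem : ∀ i, 1 ≤ i → i ≤ g → nSeq a i * a i ∈ gen a (i - 1)) :
    poincareSeries (gen a g) * ∏ i ∈ range (g + 1), (1 - (X : PowerSeries ℤ) ^ a i) =
      ∏ i ∈ Icc 1 g, (1 - (X : PowerSeries ℤ) ^ (nSeq a i * a i)) := by
  induction g with
  | zero =>
    simpa [gen_zero] using poincareSeries_dvd_mul_one_sub_X_pow (hpos 0 le_rfl)
  | succ g ih =>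
    have hstep := poincareSeries_gen_succ (hpos 0 (Nat.zero_le _)) (hpos (g + 1) le_rfl)
      (by simpa using hmem (g + 1) le_add_self le_rfl)
    rw [hstep, prod_range_succ, prod_Icc_succ_top le_add_self, mul_mul_mul_comm,
      ih (fun i hi => hpos i hi.step) (fun i h1 h2 => hmem i h1 h2.step), geom_sum_mul_neg,
      ← pow_mul, mul_comm (a (g + 1))]

end Generators

open scoped Classical in
theorem stmt_4 (g : ℕ) (a : ℕ → ℕ) (hpos : ∀ i, i ≤ g → 0 < a i)
    (hfree : IsFreeArr a g) :
    poincareSeries (gen a g) *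
        ∏ i ∈ Finset.range (g + 1), (1 - (PowerSeries.X : PowerSeries ℤ) ^ (a i)) =
      ∏ i ∈ Finset.Icc 1 g, (1 - (PowerSeries.X : PowerSeries ℤ) ^ (nSeq a i * a i)) :=
  poincareSeries_gen_mul_prod hpos hfree.2
end

section
/- Let S be a numerical semigroup and suppose (a_0,…,a_g) and (a'_0,…,a'_g) are two arrangements of the same positive integers (one is a permutation of the other) such that S = ⟨a_0,…,a_g⟩ is free for both arrangements; let n_i (resp. n'_i) be the quotients e_{i-1}/e_i computed from the first (resp. second) arrangement. Then the multisets {n_1·a_1, n_2·a_2, …, n_g·a_g} and {n'_1·a'_1, n'_2·a'_2, …, n'_g·a'_g} are equal. -/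
open Finset PowerSeries

noncomputable def hilbertSeries (S : Set ℕ) : ℤ⟦X⟧ := PowerSeries.mk (S.indicator 1)

theorem coeff_hilbertSeries (S : Set ℕ) (N : ℕ) [Decidable (N ∈ S)] :
    coeff N (hilbertSeries S) = if N ∈ S then 1 else 0 := by
  rw [hilbertSeries, coeff_mk, Set.indicator_apply, Pi.one_apply]

theorem coeff_hilbertSeries_mul_X_pow (S : Set ℕ) (k N : ℕ) [Decidable (N - k ∈ S)] :
    coeff N (hilbertSeries S * X ^ k) = if k ≤ N ∧ N - k ∈ S then 1 else 0 := by
  rw [coeff_mul_X_pow', coeff_hilbertSeries, ite_and]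

theorem hilbertSeries_mul_one_sub_X_pow_of_forall_dvd_iff {S : Set ℕ} {d : ℕ} (hd : 0 < d)
    (hS : ∀ N, N ∈ S ↔ d ∣ N) : hilbertSeries S * (1 - X ^ d) = 1 := by
  classical
  ext N
  rw [mul_sub, mul_one, map_sub, coeff_hilbertSeries_mul_X_pow, coeff_hilbertSeries, coeff_one,
    hS, hS]
  rcases N.eq_zero_or_pos with rfl | hN
  · simp [hd.ne']
  · by_cases hdN : d ∣ N
    · simp [hdN, Nat.le_of_dvd hN hdN, hN.ne']
    · have hdN' : d ≠ N := by rintro rfl; exact hdN dvd_rfl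
      simp [hdN, hN.ne', hdN'.le_iff_lt]

theorem hilbertSeries_eq_mul_geom_sum {T U : Set ℕ} {A n : ℕ}
    (hU : ∀ N, N ∈ U ↔ ∃ c < n, c * A ≤ N ∧ N - c * A ∈ T)
    (huniq : ∀ N, ∀ c₁ < n, ∀ c₂ < n, c₁ * A ≤ N → N - c₁ * A ∈ T →
      c₂ * A ≤ N → N - c₂ * A ∈ T → c₁ = c₂) :
    hilbertSeries U = hilbertSeries T * ∑ c ∈ range n, (X ^ A) ^ c := by
  classical
  ext N
  simp only [mul_sum, map_sum, ← pow_mul, mul_comm A, coeff_hilbertSeries_mul_X_pow, sum_boole,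
    coeff_hilbertSeries]
  by_cases hN : N ∈ U
  · obtain ⟨c, hc, hcN⟩ := (hU N).mp hN
    have hfilter : {c' ∈ range n | c' * A ≤ N ∧ N - c' * A ∈ T} = {c} :=
      eq_singleton_iff_unique_mem.mpr ⟨mem_filter.mpr ⟨mem_range.mpr hc, hcN⟩,
        fun c' hc' => by
          obtain ⟨hc'n, hc'N⟩ := mem_filter.mp hc'
          exact huniq N c' (mem_range.mp hc'n) c hc hc'N.1 hc'N.2 hcN.1 hcN.2⟩
    simp [hN, hfilter]
  · have hfilter : {c' ∈ range n | c' * A ≤ N ∧ N - c' * A ∈ T} = ∅ :=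
      filter_eq_empty_iff.mpr fun c hc hcN => hN ((hU N).mpr ⟨c, mem_range.mp hc, hcN⟩)
    simp [hN, hfilter]

noncomputable def prodOneSubXPow (M : Multiset ℕ) : ℤ⟦X⟧ := (M.map fun m => 1 - X ^ m).prod

theorem prodOneSubXPow_add (M M' : Multiset ℕ) :
    prodOneSubXPow (M + M') = prodOneSubXPow M * prodOneSubXPow M' := by
  simp [prodOneSubXPow]

theorem constantCoeff_prodOneSubXPow {M : Multiset ℕ} (hM : ∀ m ∈ M, 0 < m) :
    constantCoeff (prodOneSubXPow M) = 1 := by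
  rw [prodOneSubXPow, map_multiset_prod, Multiset.map_map]
  refine Multiset.prod_eq_one fun y hy => ?_
  obtain ⟨m, hm, rfl⟩ := Multiset.mem_map.mp hy
  simp [(hM m hm).ne']

theorem prodOneSubXPow_ne_zero {M : Multiset ℕ} (hM : ∀ m ∈ M, 0 < m) : prodOneSubXPow M ≠ 0 :=
  fun h => by simpa [h] using constantCoeff_prodOneSubXPow hM

theorem coeff_prodOneSubXPow_of_forall_le {M : Multiset ℕ} {m : ℕ} (hm : 0 < m)
    (hM : ∀ x ∈ M, m ≤ x) : coeff m (prodOneSubXPow M) = -M.count m := by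
  induction M using Multiset.induction with
  | empty => simp [prodOneSubXPow, hm.ne']
  | cons x M ih =>
    have hM' : ∀ y ∈ M, m ≤ y := fun y hy => hM y (Multiset.mem_cons_of_mem hy)
    rw [← Multiset.singleton_add, prodOneSubXPow_add, prodOneSubXPow, Multiset.map_singleton,
      Multiset.prod_singleton, sub_mul, one_mul, map_sub, coeff_X_pow_mul', ih hM',
      Multiset.count_add, Multiset.count_singleton]
    rcases (hM x (Multiset.mem_cons_self x M)).lt_or_eq with hlt | rfl
    · simp [hlt.not_ge, hlt.ne]
    · rw [if_pos le_rfl, Nat.sub_self, coeff_zero_eq_constantCoeff,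
        constantCoeff_prodOneSubXPow fun y hy => hm.trans_le (hM' y hy)]
      simp [sub_eq_add_neg]

theorem eq_of_prodOneSubXPow_eq {M M' : Multiset ℕ} (hM : ∀ m ∈ M, 0 < m)
    (hM' : ∀ m ∈ M', 0 < m) (h : prodOneSubXPow M = prodOneSubXPow M') : M = M' := by
  have hD : prodOneSubXPow (M - M') = prodOneSubXPow (M' - M) := by
    have hI : prodOneSubXPow (M ∩ M') ≠ 0 :=
      prodOneSubXPow_ne_zero fun m hm => hM m (Multiset.subset_of_le Multiset.inter_le_left hm)
    refine mul_left_cancel₀ hI ?_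
    rwa [← prodOneSubXPow_add, ← prodOneSubXPow_add, add_comm, Multiset.sub_add_inter, add_comm,
      Multiset.inter_comm, Multiset.sub_add_inter]
  by_contra hne
  have hex : ∃ m, m ∈ M - M' + (M' - M) := by
    by_contra! hempty
    obtain ⟨h₁, h₂⟩ := add_eq_zero.mp (Multiset.eq_zero_of_forall_notMem hempty)
    exact hne (le_antisymm (tsub_eq_zero_iff_le.mp h₁) (tsub_eq_zero_iff_le.mp h₂))
  -- The least exponent `m` occurring in `M - M'` or `M' - M` has coefficient `-count m` in both
  -- products, which forces both counts to vanish.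
  have hmin : ∀ x ∈ M - M' + (M' - M), Nat.find hex ≤ x := fun x hx => Nat.find_min' hex hx
  have hpos : 0 < Nat.find hex := by
    rcases Multiset.mem_add.mp (Nat.find_spec hex) with h | h
    · exact hM _ (Multiset.subset_of_le tsub_le_self h)
    · exact hM' _ (Multiset.subset_of_le tsub_le_self h)
  have hcoeff := congrArg (coeff (Nat.find hex)) hD
  rw [coeff_prodOneSubXPow_of_forall_le hpos fun x hx => hmin x (Multiset.mem_add.mpr (.inl hx)),
    coeff_prodOneSubXPow_of_forall_le hpos fun x hx => hmin x (Multiset.mem_add.mpr (.inr hx)),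
    neg_inj, Nat.cast_inj, Multiset.count_sub, Multiset.count_sub] at hcoeff
  have hcount := Multiset.count_pos.mpr (Nat.find_spec hex)
  rw [Multiset.count_add, Multiset.count_sub, Multiset.count_sub] at hcount
  omega

namespace NumericalSemigroup

variable {a a' : ℕ → ℕ} {g : ℕ}

theorem eSeq_pos (h : 0 < a 0) : ∀ g, 0 < eSeq a g
  | 0 => h
  | g + 1 => Nat.gcd_pos_of_pos_left _ (eSeq_pos h g)

theorem eSeq_dvd {i : ℕ} (hi : i ≤ g) : eSeq a g ∣ a i := by
  induction g with
  | zero => rw [Nat.le_zero.mp hi]; rfl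
  | succ g ih =>
    rcases hi.lt_or_eq with hi | rfl
    · exact (Nat.gcd_dvd_left _ _).trans (ih (Nat.lt_succ_iff.mp hi))
    · exact Nat.gcd_dvd_right _ _

theorem nSeq_pos (h : 0 < a 0) (g : ℕ) : 0 < nSeq a (g + 1) :=
  Nat.div_pos (Nat.gcd_le_left _ (eSeq_pos h g)) (Nat.gcd_pos_of_pos_left _ (eSeq_pos h g))

theorem gen_eq_closure (a : ℕ → ℕ) (g : ℕ) :
    gen a g = AddSubmonoid.closure (a '' ↑(range (g + 1))) := by
  ext s
  constructor
  · rintro ⟨c, rfl⟩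
    exact AddSubmonoid.sum_mem _ fun j hj =>
      AddSubmonoid.nsmul_mem _ (AddSubmonoid.subset_closure (Set.mem_image_of_mem a hj)) (c j)
  · intro hs
    induction hs using AddSubmonoid.closure_induction with
    | mem x hx =>
      obtain ⟨i, hi, rfl⟩ := hx
      exact ⟨Pi.single i 1, by simp [Pi.single_apply, ite_mul, mem_coe.mp hi]⟩
    | zero => exact ⟨0, by simp⟩
    | add x y _ _ hx hy =>
      obtain ⟨c, rfl⟩ := hx
      obtain ⟨d, rfl⟩ := hy
      exact ⟨c + d, by simp [add_mul, sum_add_distrib]⟩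

theorem dvd_of_mem_gen {s : ℕ} (hs : s ∈ gen a g) : eSeq a g ∣ s := by
  obtain ⟨c, rfl⟩ := hs
  exact dvd_sum fun j hj => (eSeq_dvd (Nat.lt_succ_iff.mp (mem_range.mp hj))).mul_left _

theorem mem_gen_succ_iff {N : ℕ} :
    N ∈ gen a (g + 1) ↔ ∃ t ∈ gen a g, ∃ c, N = t + c * a (g + 1) := by
  rw [gen_eq_closure a (g + 1), gen_eq_closure a g, range_add_one (n := g + 1), coe_insert,
    Set.image_insert_eq, Set.insert_eq, AddSubmonoid.closure_union]
  simp only [SetLike.mem_coe, AddSubmonoid.mem_sup, AddSubmonoid.mem_closure_singleton,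
    smul_eq_mul]
  constructor
  · rintro ⟨_, ⟨c, rfl⟩, t, ht, rfl⟩
    exact ⟨t, ht, c, add_comm _ _⟩
  · rintro ⟨t, ht, c, rfl⟩
    exact ⟨_, ⟨c, rfl⟩, t, ht, add_comm _ _⟩

theorem add_mul_mem_gen {t s : ℕ} (ht : t ∈ gen a g) (hs : s ∈ gen a g) (k : ℕ) :
    t + k * s ∈ gen a g := by
  rw [gen_eq_closure] at *
  exact add_mem ht (nsmul_mem hs k)

theorem exists_lt_nSeq_of_mem_gen_succ {N : ℕ} (h0 : 0 < a 0)
    (hfree : nSeq a (g + 1) * a (g + 1) ∈ gen a g) (hN : N ∈ gen a (g + 1)) :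
    ∃ c < nSeq a (g + 1), c * a (g + 1) ≤ N ∧ N - c * a (g + 1) ∈ gen a g := by
  obtain ⟨t, ht, d, rfl⟩ := mem_gen_succ_iff.mp hN
  set n := nSeq a (g + 1)
  have hd : d * a (g + 1) = d % n * a (g + 1) + d / n * (n * a (g + 1)) := by
    conv_lhs => rw [← Nat.mod_add_div d n]
    ring
  refine ⟨d % n, Nat.mod_lt d (nSeq_pos h0 g), by rw [hd]; omega, ?_⟩
  rw [hd, ← add_assoc, add_right_comm, Nat.add_sub_cancel]
  exact add_mul_mem_gen ht hfree _

theorem eq_of_sub_mul_mem_gen {N c₁ c₂ : ℕ} (h0 : 0 < a 0)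
    (hc₁ : c₁ < nSeq a (g + 1)) (hc₂ : c₂ < nSeq a (g + 1))
    (hle₁ : c₁ * a (g + 1) ≤ N) (hmem₁ : N - c₁ * a (g + 1) ∈ gen a g)
    (hle₂ : c₂ * a (g + 1) ≤ N) (hmem₂ : N - c₂ * a (g + 1) ∈ gen a g) : c₁ = c₂ := by
  have hmod : ∀ c, c * a (g + 1) ≤ N → N - c * a (g + 1) ∈ gen a g →
      N ≡ c * a (g + 1) [MOD eSeq a g] := fun c hle hmem => by
    have := (Nat.modEq_zero_iff_dvd.mpr (dvd_of_mem_gen hmem)).add_right (c * a (g + 1))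
    rwa [Nat.sub_add_cancel hle, zero_add] at this
  have h : c₁ * a (g + 1) ≡ c₂ * a (g + 1) [MOD eSeq a g] :=
    (hmod c₁ hle₁ hmem₁).symm.trans (hmod c₂ hle₂ hmem₂)
  exact (h.cancel_right_div_gcd (eSeq_pos h0 g)).eq_of_lt_of_lt hc₁ hc₂

theorem hilbertSeries_gen_zero_mul (h0 : 0 < a 0) :
    hilbertSeries (gen a 0) * (1 - X ^ a 0) = 1 := by
  refine hilbertSeries_mul_one_sub_X_pow_of_forall_dvd_iff h0 fun N => ⟨dvd_of_mem_gen, ?_⟩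
  rintro ⟨k, rfl⟩
  exact ⟨fun _ => k, by simp [mul_comm]⟩

theorem hilbertSeries_gen_succ (h0 : 0 < a 0)
    (hfree : nSeq a (g + 1) * a (g + 1) ∈ gen a g) :
    hilbertSeries (gen a (g + 1)) =
      hilbertSeries (gen a g) * ∑ c ∈ range (nSeq a (g + 1)), (X ^ a (g + 1)) ^ c :=
  hilbertSeries_eq_mul_geom_sum
    (fun _ => ⟨exists_lt_nSeq_of_mem_gen_succ h0 hfree, fun ⟨c, _, hle, hmem⟩ =>
      mem_gen_succ_iff.mpr ⟨_, hmem, c, (Nat.sub_add_cancel hle).symm⟩⟩)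
    (fun _ _ hc₁ _ hc₂ => eq_of_sub_mul_mem_gen h0 hc₁ hc₂)

theorem hilbertSeries_gen_mul_prod (h0 : 0 < a 0)
    (hfree : ∀ i, 1 ≤ i → i ≤ g → nSeq a i * a i ∈ gen a (i - 1)) :
    hilbertSeries (gen a g) * ∏ i ∈ range (g + 1), (1 - X ^ a i) =
      ∏ i ∈ Icc 1 g, (1 - X ^ (nSeq a i * a i)) := by
  induction g with
  | zero => simpa using hilbertSeries_gen_zero_mul h0
  | succ g ih =>
    have hstep : nSeq a (g + 1) * a (g + 1) ∈ gen a g := hfree (g + 1) (by omega) le_rfl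
    rw [prod_range_succ, prod_Icc_succ_top (by omega), hilbertSeries_gen_succ h0 hstep,
      ← ih fun i hi hig => hfree i hi (by omega), mul_comm (nSeq a _), pow_mul,
      ← geom_sum_mul_neg (X ^ a (g + 1))]
    ring

theorem gen_eq_of_perm {σ : Equiv.Perm (Fin (g + 1))} (hσ : ∀ i : Fin (g + 1), a' i = a (σ i)) :
    gen a' g = gen a g := by
  have himage : ∀ b : ℕ → ℕ, b '' ↑(range (g + 1)) = Set.range fun i : Fin (g + 1) => b i := by
    intro b
    rw [coe_range, ← Fin.range_val, ← Set.range_comp]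
    rfl
  rw [gen_eq_closure, gen_eq_closure, himage, himage, funext hσ]
  exact congrArg (fun s : Set ℕ => (AddSubmonoid.closure s : Set ℕ))
    (σ.surjective.range_comp fun i : Fin (g + 1) => a i)

theorem prod_range_eq_of_perm {σ : Equiv.Perm (Fin (g + 1))}
    (hσ : ∀ i : Fin (g + 1), a' i = a (σ i)) {M : Type*} [CommMonoid M] (f : ℕ → M) :
    ∏ i ∈ range (g + 1), f (a' i) = ∏ i ∈ range (g + 1), f (a i) := by
  rw [← Fin.prod_univ_eq_prod_range (fun i => f (a' i)),
    ← Fin.prod_univ_eq_prod_range (fun i => f (a i))]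
  simp only [hσ]
  exact Equiv.prod_comp σ fun i => f (a i)

theorem prodOneSubXPow_nSeq_mul (h0 : 0 < a 0)
    (hfree : ∀ i, 1 ≤ i → i ≤ g → nSeq a i * a i ∈ gen a (i - 1)) :
    prodOneSubXPow ((Icc 1 g).val.map fun i => nSeq a i * a i) =
      hilbertSeries (gen a g) * ∏ i ∈ range (g + 1), (1 - X ^ a i) := by
  rw [hilbertSeries_gen_mul_prod h0 hfree, prodOneSubXPow, Multiset.map_map]
  rfl

theorem nSeq_mul_pos {i : ℕ} (hpos : ∀ i, i ≤ g → 0 < a i) (hi : i ∈ Icc 1 g) :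
    0 < nSeq a i * a i := by
  obtain ⟨hi₁, hig⟩ := mem_Icc.mp hi
  obtain ⟨j, rfl⟩ : ∃ j, i = j + 1 := ⟨i - 1, by omega⟩
  exact Nat.mul_pos (nSeq_pos (hpos 0 (Nat.zero_le g)) j) (hpos _ hig)

end NumericalSemigroup

open NumericalSemigroup in
theorem stmt_6 (g : ℕ) (a a' : ℕ → ℕ) (hpos : ∀ i, i ≤ g → 0 < a i)
    (hperm : ∃ σ : Equiv.Perm (Fin (g + 1)), ∀ i : Fin (g + 1), a' i.val = a (σ i).val)
    (hfree : IsFreeArr a g) (hfree' : IsFreeArr a' g) :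
    Multiset.map (fun i => nSeq a i * a i) (Finset.Icc 1 g).val =
      Multiset.map (fun i => nSeq a' i * a' i) (Finset.Icc 1 g).val := by
  obtain ⟨σ, hσ⟩ := hperm
  have hpos' : ∀ i, i ≤ g → 0 < a' i := fun i hi => by
    rw [hσ ⟨i, Nat.lt_succ_of_le hi⟩]
    exact hpos _ (Nat.lt_succ_iff.mp (σ _).isLt)
  refine eq_of_prodOneSubXPow_eq ?_ ?_ ?_
  · exact Multiset.forall_mem_map_iff.mpr fun i hi => nSeq_mul_pos hpos (mem_val.mp hi)
  · exact Multiset.forall_mem_map_iff.mpr fun i hi => nSeq_mul_pos hpos' (mem_val.mp hi)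
  · rw [prodOneSubXPow_nSeq_mul (hpos 0 g.zero_le) hfree.2,
      prodOneSubXPow_nSeq_mul (hpos' 0 g.zero_le) hfree'.2, gen_eq_of_perm hσ,
      prod_range_eq_of_perm hσ (fun m => 1 - X ^ m)]
end
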